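/- arXiv:1412.4456 — 5 statements merged into one kernel-verified Lean document; each statement's English description precedes it below -/
import Mathlib

section
/- Let N be a finite set, S ⊆ N a nonempty finite subset, and C : Finset N → ℝ a function. Define the Shapley cost share of i ∈ S as φ_i(C,S) = (1/|S|!) · Σ_{π ∈ Π(S)} [C(S_{i,π} ∪ {i}) − C(S_{i,π})], where Π(S) is the set of bijections from S to {1,…,|S|} and S_{i,π} = {j ∈ S : π(j) < π(i)}. Then Σ_{i ∈ S} φ_i(C,S) = C(S) − C(∅); in particular, if C(∅) = 0 the Shapley cost shares are budget-balanced: Σ_{i ∈ S} φ_i(C,S) = C(S). -/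
open Finset

/-- The set of players preceding `i` in the order induced by the bijection
`π : S ≃ Fin |S|`, i.e. `S_{i,π} = {j ∈ S : π(j) < π(i)}`. -/
def preSet {N : Type*} [DecidableEq N] (S : Finset N)
    (π : {x // x ∈ S} ≃ Fin S.card) (i : {x // x ∈ S}) : Finset N :=
  (S.attach.filter (fun j => π j < π i)).image Subtype.val

/-- The Shapley cost share `φ_i(C,S)` of player `i` at a resource with cost
function `C` used by the player set `S`. -/
noncomputable def shapley {N : Type*} [DecidableEq N]
    (C : Finset N → ℝ) (S : Finset N) (i : N) : ℝ :=
  if hi : i ∈ S then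
    (1 / (Nat.factorial S.card : ℝ)) *
      ∑ π : {x // x ∈ S} ≃ Fin S.card,
        (C (preSet S π ⟨i, hi⟩ ∪ {i}) - C (preSet S π ⟨i, hi⟩))
  else 0

/-!
For a fixed order `π` of `S`, the marginal costs `C(S_{i,π} ∪ {i}) - C(S_{i,π})` telescope
along the chain `∅ = P₀ ⊆ P₁ ⊆ ⋯ ⊆ P_{|S|} = S` of initial segments of `π`, so they sum to
`C(S) - C(∅)`. The Shapley shares average these sums over all `|S|!` orders.
-/

theorem Equiv.sum_sub_telescope {α G : Type*} [Fintype α] [AddCommGroup G] {n : ℕ}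
    (π : α ≃ Fin n) (f : ℕ → G) :
    ∑ a, (f (π a + 1) - f (π a)) = f n - f 0 := by
  rw [π.sum_comp (fun k => f (k + 1) - f k), Fin.sum_univ_eq_sum_range (fun k => f (k + 1) - f k),
    sum_range_sub]

namespace Shapley

variable {N : Type*} [DecidableEq N] (S : Finset N) (π : {x // x ∈ S} ≃ Fin S.card)

def initialSegment (k : ℕ) : Finset N :=
  (S.attach.filter (fun j => (π j : ℕ) < k)).image Subtype.val

theorem preSet_eq_initialSegment (i : {x // x ∈ S}) :
    preSet S π i = initialSegment S π (π i) := by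
  simp only [preSet, initialSegment, Fin.lt_def]

theorem initialSegment_succ (i : {x // x ∈ S}) :
    initialSegment S π (π i + 1) = initialSegment S π (π i) ∪ {i.val} := by
  ext x
  simp only [initialSegment, mem_union, mem_singleton, mem_image, mem_filter, mem_attach,
    true_and]
  constructor
  · rintro ⟨j, hj, rfl⟩
    rcases Nat.lt_succ_iff_lt_or_eq.mp hj with hlt | heq
    · exact Or.inl ⟨j, hlt, rfl⟩
    · exact Or.inr (congrArg Subtype.val (π.injective (Fin.ext heq)))
  · rintro (⟨j, hj, rfl⟩ | rfl)
    · exact ⟨j, by omega, rfl⟩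
    · exact ⟨i, by omega, rfl⟩

theorem initialSegment_zero : initialSegment S π 0 = ∅ := by
  simp [initialSegment]

theorem initialSegment_card : initialSegment S π S.card = S := by
  rw [initialSegment, filter_true_of_mem (fun j _ => (π j).isLt), attach_image_val]

theorem sum_marginal_eq (C : Finset N → ℝ) :
    ∑ i, (C (preSet S π i ∪ {i.val}) - C (preSet S π i)) = C S - C ∅ := by
  simp_rw [preSet_eq_initialSegment, ← initialSegment_succ]
  rw [π.sum_sub_telescope (fun k => C (initialSegment S π k)), initialSegment_card,
    initialSegment_zero]

theorem card_orders_eq_factorial : Fintype.card ({x // x ∈ S} ≃ Fin S.card) = S.card.factorial := by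
  rw [Fintype.card_equiv S.equivFin, Fintype.card_coe]

end Shapley

theorem shapley_budget_balanced_general {N : Type*} [DecidableEq N]
    (S : Finset N) (C : Finset N → ℝ) :
    (∑ i ∈ S, shapley C S i = C S - C ∅) ∧
      (C ∅ = 0 → ∑ i ∈ S, shapley C S i = C S) := by
  have hsum : ∑ i ∈ S, shapley C S i = C S - C ∅ := by
    have hfact : (S.card.factorial : ℝ) ≠ 0 := by exact_mod_cast S.card.factorial_ne_zero
    rw [← sum_coe_sort]
    simp only [shapley, coe_mem, dite_true]
    rw [← mul_sum, sum_comm]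
    simp_rw [Shapley.sum_marginal_eq]
    rw [sum_const, card_univ, Shapley.card_orders_eq_factorial, nsmul_eq_mul, ← mul_assoc, one_div,
      inv_mul_cancel₀ hfact, one_mul]
  exact ⟨hsum, fun h0 => by rw [hsum, h0, sub_zero]⟩

/-- The Shapley cost shares sum to `C(S) - C(∅)`; in particular, if `C(∅) = 0`
they are budget-balanced. -/
theorem shapley_budget_balanced {N : Type*} [DecidableEq N] [Fintype N]
    (S : Finset N) (hS : S.Nonempty) (C : Finset N → ℝ) :
    (∑ i ∈ S, shapley C S i = C S - C ∅) ∧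
      (C ∅ = 0 → ∑ i ∈ S, shapley C S i = C S) :=
  shapley_budget_balanced_general S C
end

section
/- Let N be a finite set, S ⊆ N a nonempty finite subset, and C : Finset N → ℝ a function with C(∅) = 0. For every bijection π : S → {1,…,|S|}, letting S_{i,π} = {j ∈ S : π(j) < π(i)}, one has Σ_{i ∈ S} φ_i(C, S_{i,π} ∪ {i}) = Σ_{∅ ≠ T ⊆ S} α_T · C(T), where α_T = (|S| − |T|)! · (|T| − 1)! / |S|!. In particular, the left-hand side does not depend on the choice of the bijection π. -/
/-!
The Shapley value has a potential (Hart–Mas-Colell): with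
`Φ(U) = Σ_{∅ ≠ T ⊆ U} (|U|-|T|)! (|T|-1)! / |U|! · C(T)` one has `φ_i(C,U) = Φ(U) - Φ(U ∖ {i})`.
Along an ordering `π` the sets `S_{i,π} ∪ {i}` form a chain from `∅` to `S` whose consecutive
members differ by the player `i`, so the sum telescopes to `Φ(S)`.

The potential identity comes from the classical formula
`φ_i(C,U) = Σ_{A ⊆ U ∖ {i}} |A|! (|U|-|A|-1)! / |U|! · (C(A ∪ {i}) - C(A))`: the orderings in which
exactly `A` precedes `i` are the bijections `U ≃ Fin |U|` sending `A` onto the first `|A|` positions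
and `i` to the next one, i.e. the bijections preserving a three-block colouring, and there are
`|A|! · 1! · (|U|-|A|-1)!` of them.
-/

open Finset

open scoped Nat

section FiberwiseEquiv

variable {α β γ : Type*}

def fiberwiseEquivEquiv (f : α → γ) (g : β → γ) :
    {e : α ≃ β // ∀ x, g (e x) = f x} ≃ ∀ c, ({x // f x = c} ≃ {y // g y = c}) where
  toFun e c := e.1.subtypeEquiv fun x => by rw [e.2 x]
  invFun e := ⟨Equiv.ofFiberEquiv e, Equiv.ofFiberEquiv_map e⟩
  left_inv _ := rfl
  right_inv e := funext fun c => Equiv.ext fun ⟨x, hx⟩ => by subst hx; rfl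

theorem card_fiberwise_equiv [Fintype α] [Fintype β] [DecidableEq α] [DecidableEq β]
    [Fintype γ] [DecidableEq γ] (f : α → γ) (g : β → γ)
    (h : ∀ c, Fintype.card {x // f x = c} = Fintype.card {y // g y = c}) :
    Fintype.card {e : α ≃ β // ∀ x, g (e x) = f x} = ∏ c, (Fintype.card {y // g y = c})! := by
  rw [Fintype.card_congr (fiberwiseEquivEquiv f g), Fintype.card_pi]
  exact prod_congr rfl fun c _ => by rw [Fintype.card_equiv (Fintype.equivOfCardEq (h c)), h]

end FiberwiseEquiv

section Orderings

variable {N : Type*} [DecidableEq N] {U : Finset N} (π : {x // x ∈ U} ≃ Fin U.card)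

theorem mem_preSet {i x : {x // x ∈ U}} : x.1 ∈ preSet U π i ↔ π x < π i := by
  simp [preSet]

theorem card_preSet (i : {x // x ∈ U}) : #(preSet U π i) = π i := by
  rw [preSet, card_image_of_injective _ Subtype.val_injective, ← Fin.card_Iio,
    ← card_map π.toEmbedding]
  congr 1
  ext m
  simp

theorem notMem_preSet (i : {x // x ∈ U}) : i.1 ∉ preSet U π i :=
  fun h => lt_irrefl _ ((mem_preSet π).1 h)

theorem preSet_subset_erase (i : {x // x ∈ U}) : preSet U π i ⊆ U.erase i := by
  intro a ha
  obtain ⟨x, -, rfl⟩ := mem_image.1 ha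
  refine mem_erase.2 ⟨fun hxi => ?_, x.2⟩
  rw [Subtype.ext hxi] at ha
  exact notMem_preSet π i ha

end Orderings

section Counting

variable {N : Type*} [DecidableEq N]

/-- The position of `x` relative to `i` in an ordering that lists `A` first, then `i`,
then everything else. -/
def blockOrder (A : Finset N) (i x : N) : Ordering :=
  if x ∈ A then .lt else if x = i then .eq else .gt

omit [DecidableEq N] in
theorem card_subtype_coe_eq_card_filter (U : Finset N) (p : N → Prop) [DecidablePred p] :
    Fintype.card {x : {x // x ∈ U} // p x} = #(U.filter p) := by
  simp [Fintype.card_subtype, filter_attach]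

theorem prod_univ_ordering {M : Type*} [CommMonoid M] (f : Ordering → M) :
    ∏ c, f c = f .lt * f .eq * f .gt := by
  rw [show (univ : Finset Ordering) = {.lt, .eq, .gt} from rfl, prod_insert (by decide),
    prod_insert (by decide), prod_singleton, mul_assoc]

variable {U A : Finset N} {i : N}

theorem card_blockOrder_fiber (hi : i ∈ U) (hA : A ⊆ U.erase i) (hk : #A < #U) (c : Ordering) :
    Fintype.card {x : {x // x ∈ U} // blockOrder A i x = c} =
      Fintype.card {m : Fin #U // compare m ⟨#A, hk⟩ = c} := by
  have hAU : A ⊆ U := hA.trans (erase_subset i U)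
  rw [card_subtype_coe_eq_card_filter U (blockOrder A i · = c), Fintype.card_subtype]
  cases c
  · have hfib : U.filter (blockOrder A i · = .lt) = A := by
      ext x
      rw [mem_filter, blockOrder]
      split_ifs with h <;> grind
    simp [hfib, compare_lt_iff_lt, filter_gt_eq_Iio]
  · have hfib : U.filter (blockOrder A i · = .eq) = {i} := by
      ext x
      rw [mem_filter, mem_singleton, blockOrder]
      split_ifs with h h' <;> grind
    simp [hfib, Finset.filter_eq']
  · have hfib : U.filter (blockOrder A i · = .gt) = U.erase i \ A := by
      ext x
      rw [mem_filter, mem_sdiff, mem_erase, blockOrder]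
      split_ifs with h h' <;> grind
    simp [hfib, compare_gt_iff_gt, filter_lt_eq_Ioi, card_sdiff_of_subset hA, card_erase_of_mem hi]

theorem preSet_eq_iff (π : {x // x ∈ U} ≃ Fin #U) (hi : i ∈ U) (hA : A ⊆ U.erase i)
    (hk : #A < #U) :
    preSet U π ⟨i, hi⟩ = A ↔ ∀ x, compare (π x) ⟨#A, hk⟩ = blockOrder A i x := by
  have hiA : i ∉ A := fun h => (mem_erase.1 (hA h)).1 rfl
  have hAU : A ⊆ U := hA.trans (erase_subset i U)
  constructor
  · rintro rfl x
    have hpos : π ⟨i, hi⟩ = ⟨#(preSet U π ⟨i, hi⟩), hk⟩ := Fin.ext (card_preSet π _).symm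
    rw [← hpos]
    simp only [blockOrder, mem_preSet]
    split_ifs with hlt heq
    · exact compare_lt_iff_lt.2 hlt
    · rw [show x = ⟨i, hi⟩ from Subtype.ext heq, compare_eq_iff_eq.2 rfl]
    · refine compare_gt_iff_gt.2 (lt_of_le_of_ne (not_lt.1 hlt) fun h => heq ?_)
      exact congrArg Subtype.val (π.injective h.symm)
  · intro h
    have hpos : π ⟨i, hi⟩ = ⟨#A, hk⟩ := by
      simpa [blockOrder, hiA] using h ⟨i, hi⟩
    have hmem (x : {x // x ∈ U}) : x.1 ∈ A ↔ π x < π ⟨i, hi⟩ := by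
      rw [hpos, ← compare_lt_iff_lt, h x, blockOrder]
      split_ifs <;> simp_all
    ext a
    constructor
    · intro ha
      obtain ⟨x, -, rfl⟩ := mem_image.1 ha
      exact (hmem x).2 ((mem_preSet π).1 ha)
    · intro ha
      exact (mem_preSet π (x := ⟨a, hAU ha⟩)).2 ((hmem _).1 ha)

theorem card_filter_preSet_eq (hi : i ∈ U) (hA : A ⊆ U.erase i) :
    #{π : {x // x ∈ U} ≃ Fin #U | preSet U π ⟨i, hi⟩ = A} = (#A)! * (#U - #A - 1)! := by
  have hk : #A < #U := (card_le_card hA).trans_lt (card_erase_lt_of_mem hi)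
  rw [← Fintype.card_subtype, Fintype.card_congr (Equiv.subtypeEquivRight
    (fun π => preSet_eq_iff π hi hA hk)), card_fiberwise_equiv _ _ (card_blockOrder_fiber hi hA hk),
    prod_univ_ordering]
  simp [Fintype.card_subtype, compare_lt_iff_lt, filter_gt_eq_Iio, compare_gt_iff_gt,
    filter_lt_eq_Ioi, Nat.sub_right_comm]

end Counting

section Potential

variable {N : Type*} [DecidableEq N]

/-- `potentialCoeff n t` is `α_T` for `|S| = n`, `|T| = t`. At `t = 0` it is the junk value `1`
(as `0 - 1 = 0` in `ℕ`), which only ever multiplies `C ∅ = 0`. -/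
noncomputable def potentialCoeff (n t : ℕ) : ℝ := (n - t)! * (t - 1)! / n !

noncomputable def shapleyPotential (C : Finset N → ℝ) (U : Finset N) : ℝ :=
  ∑ T ∈ U.powerset, potentialCoeff #U #T * C T

theorem shapley_eq_sum_powerset_erase (C : Finset N → ℝ) {U : Finset N} {i : N} (hi : i ∈ U) :
    shapley C U i =
      ∑ A ∈ (U.erase i).powerset, potentialCoeff #U (#A + 1) * (C (insert i A) - C A) := by
  rw [shapley, dif_pos hi, ← sum_fiberwise_of_maps_to' (t := (U.erase i).powerset)
    (fun π _ => mem_powerset.2 (preSet_subset_erase π _)) (fun A => C (A ∪ {i}) - C A), mul_sum]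
  refine sum_congr rfl fun A hA => ?_
  rw [sum_const, card_filter_preSet_eq hi (mem_powerset.1 hA), nsmul_eq_mul, potentialCoeff,
    Nat.add_sub_cancel, Nat.sub_sub, union_comm, ← insert_eq]
  push_cast
  ring

theorem potentialCoeff_succ_sub {k m : ℕ} (hk : 0 < k) (hkm : k ≤ m) :
    potentialCoeff (m + 1) k - potentialCoeff m k = -potentialCoeff (m + 1) (k + 1) := by
  obtain ⟨j, rfl⟩ := Nat.exists_eq_add_one_of_ne_zero hk.ne'
  obtain ⟨l, rfl⟩ := Nat.exists_eq_add_of_le hkm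
  have h₁ : j + 1 + l + 1 - (j + 1) = l + 1 := by omega
  have h₂ : j + 1 + l + 1 - (j + 1 + 1) = l := by omega
  simp only [potentialCoeff, h₁, h₂, Nat.add_sub_cancel, Nat.add_sub_cancel_left]
  rw [Nat.factorial_succ (j + 1 + l), Nat.factorial_succ l, Nat.factorial_succ j]
  push_cast
  field_simp
  ring

theorem shapley_eq_shapleyPotential_sub {C : Finset N → ℝ} (hC : C ∅ = 0) {U : Finset N} {i : N}
    (hi : i ∈ U) : shapley C U i = shapleyPotential C U - shapleyPotential C (U.erase i) := by
  set U' := U.erase i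
  have hiU' : i ∉ U' := notMem_erase i U
  have hcard : #U = #U' + 1 := (card_erase_add_one hi).symm
  have hsplit : shapleyPotential C U = ∑ A ∈ U'.powerset, potentialCoeff #U #A * C A +
      ∑ A ∈ U'.powerset, potentialCoeff #U (#A + 1) * C (insert i A) := by
    rw [shapleyPotential, ← insert_erase hi, sum_powerset_insert hiU']
    refine congrArg _ (sum_congr rfl fun A hA => ?_)
    rw [card_insert_of_notMem fun h => hiU' (mem_powerset.1 hA h)]
  have hterm : ∀ A ∈ U'.powerset, potentialCoeff #U (#A + 1) * (C (insert i A) - C A) =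
      potentialCoeff #U #A * C A + potentialCoeff #U (#A + 1) * C (insert i A) -
        potentialCoeff #U' #A * C A := by
    intro A hA
    rcases A.eq_empty_or_nonempty with rfl | hA0
    · simp [hC]
    · have := potentialCoeff_succ_sub (card_pos.2 hA0) (card_le_card (mem_powerset.1 hA))
      rw [hcard]
      linear_combination (-C A) * this
  rw [shapley_eq_sum_powerset_erase C hi, sum_congr rfl hterm, sum_sub_distrib, sum_add_distrib,
    hsplit, shapleyPotential]

end Potential

section Telescoping

variable {N : Type*} [DecidableEq N] {S : Finset N} (π : {x // x ∈ S} ≃ Fin #S)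

def initialSegment (k : ℕ) : Finset N :=
  (S.attach.filter (fun j => (π j : ℕ) < k)).image Subtype.val

theorem preSet_eq_initialSegment (i : {x // x ∈ S}) : preSet S π i = initialSegment π (π i) :=
  rfl

theorem preSet_union_singleton (i : {x // x ∈ S}) :
    preSet S π i ∪ {i.1} = initialSegment π (π i + 1) := by
  ext a
  simp only [initialSegment, preSet, mem_union, mem_singleton, mem_image, mem_filter,
    mem_attach, true_and, Nat.lt_succ_iff_lt_or_eq, Fin.lt_def]
  constructor
  · rintro (⟨j, hj, rfl⟩ | rfl)
    · exact ⟨j, .inl hj, rfl⟩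
    · exact ⟨i, .inr rfl, rfl⟩
  · rintro ⟨j, hj | hj, rfl⟩
    · exact .inl ⟨j, hj, rfl⟩
    · exact .inr (by rw [π.injective (Fin.ext hj)])

theorem initialSegment_zero : initialSegment π 0 = ∅ := by
  simp [initialSegment]

theorem initialSegment_card : initialSegment π #S = S := by
  ext a
  simp [initialSegment]

theorem sum_shapley_preSet {C : Finset N → ℝ} (hC : C ∅ = 0) :
    ∑ i ∈ S.attach, shapley C (preSet S π i ∪ {i.1}) i.1 = shapleyPotential C S := by
  have hstep (i : {x // x ∈ S}) : shapley C (preSet S π i ∪ {i.1}) i.1 =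
      shapleyPotential C (initialSegment π (π i + 1)) -
        shapleyPotential C (initialSegment π (π i)) := by
    rw [← preSet_eq_initialSegment, ← preSet_union_singleton,
      shapley_eq_shapleyPotential_sub hC (mem_union_right _ (mem_singleton_self _)), union_comm,
      ← insert_eq, erase_insert (notMem_preSet π i)]
  let F k := shapleyPotential C (initialSegment π k)
  calc ∑ i ∈ S.attach, shapley C (preSet S π i ∪ {i.1}) i.1
      = ∑ k : Fin #S, (F (k + 1) - F k) := by
        rw [← univ_eq_attach]
        exact Fintype.sum_equiv π _ _ hstep
    _ = F #S - F 0 := by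
        rw [Fin.sum_univ_eq_sum_range (fun k => F (k + 1) - F k), sum_range_sub]
    _ = shapleyPotential C S := by
        simp [F, initialSegment_card, initialSegment_zero, shapleyPotential, hC]

end Telescoping

theorem shapley_potential_coefficients_general {N : Type*} [DecidableEq N]
    (S : Finset N) (C : Finset N → ℝ) (hC : C ∅ = 0)
    (π : {x // x ∈ S} ≃ Fin S.card) :
    ∑ i ∈ S.attach, shapley C (preSet S π i ∪ {i.val}) i.val =
      ∑ T ∈ S.powerset.filter (fun T => T.Nonempty),
        ((Nat.factorial (S.card - T.card) : ℝ) * (Nat.factorial (T.card - 1) : ℝ) /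
            (Nat.factorial S.card : ℝ)) * C T := by
  rw [sum_shapley_preSet π hC, shapleyPotential]
  refine (sum_filter_of_ne fun T _ hT => nonempty_iff_ne_empty.2 ?_).symm
  rintro rfl
  simp [hC] at hT

/-- For every bijection `π : S → {1,…,|S|}`, one has
`Σ_{i ∈ S} φ_i(C, S_{i,π} ∪ {i}) = Σ_{∅ ≠ T ⊆ S} α_T · C(T)` with
`α_T = (|S|-|T|)!(|T|-1)!/|S|!`; in particular the left-hand side is
independent of `π`. -/
theorem shapley_potential_coefficients {N : Type*} [DecidableEq N] [Fintype N]
    (S : Finset N) (hS : S.Nonempty) (C : Finset N → ℝ) (hC : C ∅ = 0)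
    (π : {x // x ∈ S} ≃ Fin S.card) :
    ∑ i ∈ S.attach, shapley C (preSet S π i ∪ {i.val}) i.val =
      ∑ T ∈ S.powerset.filter (fun T => T.Nonempty),
        ((Nat.factorial (S.card - T.card) : ℝ) * (Nat.factorial (T.card - 1) : ℝ) /
            (Nat.factorial S.card : ℝ)) * C T :=
  shapley_potential_coefficients_general S C hC π
end

section
/- In any n-player resource allocation model with nonnegative cost functions, every strategy vector P satisfies C(P) ≤ n · Φ(P), where C(P) = Σ_{r ∈ R} C^r(P^r) is the social cost and Φ(P) = Σ_{r ∈ R} Σ_{∅ ≠ T ⊆ P^r} ((|P^r| − |T|)! (|T| − 1)! / |P^r|!) · C^r(T) is the Shapley potential. -/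
open Finset

/-- `users P r = P^r = {i : r ∈ P_i}`, the set of players using resource `r`. -/
def users {n : ℕ} {R : Type*} [DecidableEq R]
    (P : Fin n → Finset R) (r : R) : Finset (Fin n) :=
  Finset.univ.filter (fun i => r ∈ P i)

/-- The private cost of player `i` under Shapley cost sharing:
`C_i(P) = Σ_{r ∈ P_i} φ_i(C^r, P^r)`. -/
noncomputable def privCost {n : ℕ} {R : Type*} [DecidableEq R]
    (Cr : R → Finset (Fin n) → ℝ) (P : Fin n → Finset R) (i : Fin n) : ℝ :=
  ∑ r ∈ P i, shapley (Cr r) (users P r) i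

/-- The social cost `C(P) = Σ_{r ∈ R} C^r(P^r)`. -/
noncomputable def socCost {n : ℕ} {R : Type*} [Fintype R] [DecidableEq R]
    (Cr : R → Finset (Fin n) → ℝ) (P : Fin n → Finset R) : ℝ :=
  ∑ r : R, Cr r (users P r)

/-- The Shapley potential
`Φ(P) = Σ_{r ∈ R} Σ_{∅ ≠ T ⊆ P^r} ((|P^r|-|T|)!(|T|-1)!/|P^r|!) · C^r(T)`. -/
noncomputable def pot {n : ℕ} {R : Type*} [Fintype R] [DecidableEq R]
    (Cr : R → Finset (Fin n) → ℝ) (P : Fin n → Finset R) : ℝ :=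
  ∑ r : R, ∑ T ∈ (users P r).powerset.filter (fun T => T.Nonempty),
    ((Nat.factorial ((users P r).card - T.card) : ℝ) *
        (Nat.factorial (T.card - 1) : ℝ) / (Nat.factorial (users P r).card : ℝ)) *
      Cr r T

/-- `P` is a pure Nash equilibrium of the Shapley cost sharing game. -/
def isPNE {n : ℕ} {R : Type*} [DecidableEq R]
    (Strat : Fin n → Set (Finset R)) (Cr : R → Finset (Fin n) → ℝ)
    (P : Fin n → Finset R) : Prop :=
  (∀ i, P i ∈ Strat i) ∧
    ∀ i, ∀ Q ∈ Strat i, privCost Cr P i ≤ privCost Cr (Function.update P i Q) i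

/-- `H_k`, the `k`-th harmonicNum number. -/
noncomputable def harmonicNum (k : ℕ) : ℝ := ∑ l ∈ Finset.Icc 1 k, (1 / (l : ℝ))

open scoped Nat

lemma factorial_sub_self_mul_factorial_pred_div_factorial {k : ℕ} (hk : k ≠ 0) :
    ((k - k)! : ℝ) * (k - 1)! / k ! = 1 / k := by
  rw [Nat.sub_self, Nat.factorial_zero, ← Nat.mul_factorial_pred hk]
  push_cast
  field_simp

section ShapleyWeights

variable {N : Type*} (C : Finset N → ℝ) (S : Finset N)

lemma shapleyWeight_mul_nonneg (hnn : ∀ T, 0 ≤ C T) (T : Finset N) :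
    0 ≤ ((S.card - T.card)! * (T.card - 1)! / S.card ! : ℝ) * C T :=
  mul_nonneg (by positivity) (hnn T)

/-- The term `T = S` alone suffices: its weight is `0! (|S| - 1)! / |S|! = 1 / |S|`, and the other
terms are nonnegative. -/
lemma le_card_mul_sum_shapleyWeight_mul (hC0 : C ∅ = 0) (hnn : ∀ T, 0 ≤ C T) :
    C S ≤ S.card * ∑ T ∈ S.powerset.filter (fun T => T.Nonempty),
      ((S.card - T.card)! * (T.card - 1)! / S.card ! : ℝ) * C T := by
  obtain rfl | hS := S.eq_empty_or_nonempty
  · simp [hC0]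
  have hmem : S ∈ S.powerset.filter (fun T => T.Nonempty) := by simp [hS]
  have hcard : (S.card : ℝ) ≠ 0 := by exact_mod_cast hS.card_pos.ne'
  calc C S = S.card * ((S.card - S.card)! * (S.card - 1)! / S.card ! * C S) := by
        rw [factorial_sub_self_mul_factorial_pred_div_factorial hS.card_pos.ne']
        field_simp
    _ ≤ _ := by
        gcongr
        exact single_le_sum (fun T _ => shapleyWeight_mul_nonneg C S hnn T) hmem

end ShapleyWeights

theorem socCost_le_card_mul_pot_general {n : ℕ} {R : Type*} [Fintype R] [DecidableEq R]
    (Cr : R → Finset (Fin n) → ℝ)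
    (hC0 : ∀ r, Cr r ∅ = 0)
    (hnn : ∀ r T, 0 ≤ Cr r T)
    (P : Fin n → Finset R) :
    socCost Cr P ≤ (n : ℝ) * pot Cr P := by
  rw [socCost, pot, mul_sum]
  gcongr with r
  have hcard : ((users P r).card : ℝ) ≤ n := by
    exact_mod_cast (card_le_univ (users P r)).trans_eq (Fintype.card_fin n)
  exact (le_card_mul_sum_shapleyWeight_mul _ _ (hC0 r) (hnn r)).trans <|
    mul_le_mul_of_nonneg_right hcard
      (sum_nonneg fun T _ => shapleyWeight_mul_nonneg _ _ (hnn r) T)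

/-- The social cost is at most `n` times the Shapley potential. -/
theorem socCost_le_card_mul_pot {n : ℕ} {R : Type*} [Fintype R] [DecidableEq R]
    (Strat : Fin n → Set (Finset R)) (Cr : R → Finset (Fin n) → ℝ)
    (hC0 : ∀ r, Cr r ∅ = 0)
    (hnn : ∀ r T, 0 ≤ Cr r T)
    (P : Fin n → Finset R) (hP : ∀ i, P i ∈ Strat i) :
    socCost Cr P ≤ (n : ℝ) * pot Cr P :=
  socCost_le_card_mul_pot_general Cr hC0 hnn P
end

section
/- In any n-player resource allocation model whose cost functions C^r are nondecreasing (C^r(T) ≤ C^r(U) whenever T ⊆ U) with C^r(∅) = 0, every strategy vector P satisfies Φ(P) ≤ H_n · C(P), where Φ(P) = Σ_{r ∈ R} Σ_{∅ ≠ T ⊆ P^r} ((|P^r| − |T|)! (|T| − 1)! / |P^r|!) · C^r(T) is the Shapley potential, C(P) = Σ_{r ∈ R} C^r(P^r) is the social cost, and H_n = Σ_{l=1}^{n} 1/l. -/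
open Finset

/-- The coefficient of `C^r(T)` in `pot`, with `m = |P^r|` and `j = |T|`. -/
noncomputable def shapleyWeight (m j : ℕ) : ℝ :=
  (Nat.factorial (m - j) : ℝ) * (Nat.factorial (j - 1) : ℝ) / (Nat.factorial m : ℝ)

lemma harmonicNum_mono {k m : ℕ} (h : k ≤ m) : harmonicNum k ≤ harmonicNum m :=
  Finset.sum_le_sum_of_subset_of_nonneg (Finset.Icc_subset_Icc_right h)
    (fun _ _ _ => by positivity)

lemma choose_mul_shapleyWeight {m j : ℕ} (hj : 0 < j) (hjm : j ≤ m) :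
    (m.choose j : ℝ) * shapleyWeight m j = 1 / j := by
  have hfac : (m.choose j : ℝ) * (j * Nat.factorial (j - 1)) * Nat.factorial (m - j) =
      Nat.factorial m := by
    rw [← Nat.choose_mul_factorial_mul_factorial hjm, ← Nat.mul_factorial_pred hj.ne']
    push_cast
    ring
  have hj' : (j : ℝ) ≠ 0 := Nat.cast_ne_zero.mpr hj.ne'
  have hchoose : (m.choose j : ℝ) ≠ 0 := Nat.cast_ne_zero.mpr (Nat.choose_pos hjm).ne'
  rw [shapleyWeight, ← hfac]
  field_simp

/-- The `choose m j` subsets of size `j` contribute `1 / j` together. -/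
lemma sum_shapleyWeight {α : Type*} (S : Finset α) :
    ∑ T ∈ S.powerset with T.Nonempty, shapleyWeight #S #T = harmonicNum #S := by
  let g : ℕ → ℝ := fun j => if 0 < j then shapleyWeight #S j else 0
  calc ∑ T ∈ S.powerset with T.Nonempty, shapleyWeight #S #T
      = ∑ T ∈ S.powerset, g #T := by
        simp only [sum_filter, g, card_pos]
    _ = ∑ j ∈ Icc 1 #S, (#S).choose j • g j := by
        rw [sum_powerset_apply_card, Nat.range_succ_eq_Icc_zero,
          ← insert_Icc_add_one_left_eq_Icc (Nat.zero_le _), sum_insert (by simp)]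
        simp [g]
    _ = harmonicNum #S := by
        refine sum_congr rfl fun j hj => ?_
        obtain ⟨hj, hjS⟩ : 0 < j ∧ j ≤ #S := mem_Icc.mp hj
        simp only [g, nsmul_eq_mul, if_pos hj, choose_mul_shapleyWeight hj hjS]

lemma sum_shapleyWeight_mul_le {α : Type*} (S : Finset α) (C : Finset α → ℝ)
    (hC : ∀ T ⊆ S, C T ≤ C S) :
    ∑ T ∈ S.powerset with T.Nonempty, shapleyWeight #S #T * C T ≤ harmonicNum #S * C S := by
  rw [← sum_shapleyWeight, sum_mul]
  refine sum_le_sum fun T hT => ?_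
  have hTS : T ⊆ S := mem_powerset.mp (mem_filter.mp hT).1
  exact mul_le_mul_of_nonneg_left (hC T hTS) (by unfold shapleyWeight; positivity)

theorem pot_le_harmonic_mul_socCost_general {n : ℕ} {R : Type*} [Fintype R] [DecidableEq R]
    (Cr : R → Finset (Fin n) → ℝ)
    (hC0 : ∀ r, Cr r ∅ = 0)
    (hmono : ∀ r (T U : Finset (Fin n)), T ⊆ U → Cr r T ≤ Cr r U)
    (P : Fin n → Finset R) :
    pot Cr P ≤ harmonicNum n * socCost Cr P := by
  rw [socCost, mul_sum]
  refine sum_le_sum fun r _ => ?_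
  set S := users P r
  have hCS : 0 ≤ Cr r S := hC0 r ▸ hmono r ∅ S (empty_subset S)
  have hSn : #S ≤ n := (card_le_univ S).trans_eq (Fintype.card_fin n)
  calc ∑ T ∈ S.powerset with T.Nonempty, shapleyWeight #S #T * Cr r T
      ≤ harmonicNum #S * Cr r S := sum_shapleyWeight_mul_le S (Cr r) fun T hT => hmono r T S hT
    _ ≤ harmonicNum n * Cr r S := mul_le_mul_of_nonneg_right (harmonicNum_mono hSn) hCS

/-- The Shapley potential is at most `H_n` times the social cost. -/
theorem pot_le_harmonic_mul_socCost {n : ℕ} {R : Type*} [Fintype R] [DecidableEq R]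
    (Strat : Fin n → Set (Finset R)) (Cr : R → Finset (Fin n) → ℝ)
    (hC0 : ∀ r, Cr r ∅ = 0)
    (hmono : ∀ r (T U : Finset (Fin n)), T ⊆ U → Cr r T ≤ Cr r U)
    (P : Fin n → Finset R) (hP : ∀ i, P i ∈ Strat i) :
    pot Cr P ≤ harmonicNum n * socCost Cr P :=
  pot_le_harmonic_mul_socCost_general Cr hC0 hmono P
end

section
/- In any n-player Shapley cost sharing game with submodular cost functions, if P is a pure Nash equilibrium and Q is any strategy vector, then for every player i, C_i(P) ≤ Σ_{r ∈ Q_i} C^r({i}); that is, at equilibrium each player's private cost is at most the stand-alone cost of any of her alternative strategies. -/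
open Finset

/-! A Shapley cost share is an average of marginal costs `C(X ∪ {i}) - C(X)` with `i ∉ X`, and
submodularity together with `C(∅) = 0` bounds each of them by the stand-alone cost `C({i})`.
Deviating to `Q_i` cannot lower an equilibrium cost, so
`C_i(P) ≤ C_i(P_{-i}, Q_i) ≤ Σ_{r ∈ Q_i} C^r({i})`. -/

theorem val_notMem_preSet {N : Type*} [DecidableEq N] (S : Finset N)
    (π : {x // x ∈ S} ≃ Fin S.card) (i : {x // x ∈ S}) : i.1 ∉ preSet S π i := by
  simp only [preSet, mem_image, mem_filter, not_exists, not_and]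
  rintro j ⟨-, hlt⟩ hji
  exact (Subtype.ext hji ▸ hlt).false

theorem shapley_le_of_marginal_le {N : Type*} [DecidableEq N] (C : Finset N → ℝ)
    (S : Finset N) (i : N) {b : ℝ} (hb : 0 ≤ b)
    (hmarg : ∀ X, i ∉ X → C (X ∪ {i}) - C X ≤ b) : shapley C S i ≤ b := by
  unfold shapley
  split_ifs with hi
  · have hperm : Fintype.card ({x // x ∈ S} ≃ Fin S.card) = S.card.factorial := by
      rw [Fintype.card_equiv (S.equivFin), Fintype.card_coe]
    have hsum := sum_le_card_nsmul univ _ b fun π _ => hmarg _ (val_notMem_preSet S π ⟨i, hi⟩)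
    rw [card_univ, hperm, nsmul_eq_mul] at hsum
    have hfac : (0 : ℝ) < S.card.factorial := mod_cast S.card.factorial_pos
    rw [one_div, inv_mul_le_iff₀ hfac]
    exact hsum
  · exact hb

theorem sub_le_apply_singleton_of_submodular {N : Type*} [DecidableEq N] (C : Finset N → ℝ)
    (hC0 : C ∅ = 0)
    (hsub : ∀ (X Y : Finset N) (i : N), X ⊆ Y → i ∉ Y →
      C (insert i Y) - C Y ≤ C (insert i X) - C X)
    {X : Finset N} {i : N} (hi : i ∉ X) : C (X ∪ {i}) - C X ≤ C {i} := by
  simpa [union_singleton, hC0] using hsub ∅ X i (empty_subset X) hi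

theorem privCost_le_standalone_of_submodular_general {n : ℕ} {R : Type*} [DecidableEq R]
    (Strat : Fin n → Set (Finset R)) (Cr : R → Finset (Fin n) → ℝ)
    (hC0 : ∀ r, Cr r ∅ = 0)
    (hnn : ∀ r T, 0 ≤ Cr r T)
    (hsub : ∀ r (X Y : Finset (Fin n)) (i : Fin n), X ⊆ Y → i ∉ Y →
      Cr r (insert i Y) - Cr r Y ≤ Cr r (insert i X) - Cr r X)
    (P : Fin n → Finset R) (hP : isPNE Strat Cr P)
    (Q : Fin n → Finset R) (hQ : ∀ i, Q i ∈ Strat i)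
    (i : Fin n) :
    privCost Cr P i ≤ ∑ r ∈ Q i, Cr r {i} := by
  calc privCost Cr P i
      ≤ privCost Cr (Function.update P i (Q i)) i := hP.2 i (Q i) (hQ i)
    _ = ∑ r ∈ Q i, shapley (Cr r) (users (Function.update P i (Q i)) r) i := by
      rw [privCost, Function.update_self]
    _ ≤ ∑ r ∈ Q i, Cr r {i} := sum_le_sum fun r _ =>
      shapley_le_of_marginal_le _ _ _ (hnn r {i}) fun _ hX =>
        sub_le_apply_singleton_of_submodular (Cr r) (hC0 r) (hsub r) hX

/-- In equilibrium of a Shapley cost sharing game with submodular costs, each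
player's private cost is at most the stand-alone cost of any alternative
strategy. -/
theorem privCost_le_standalone_of_submodular {n : ℕ} {R : Type*} [Fintype R] [DecidableEq R]
    (Strat : Fin n → Set (Finset R)) (Cr : R → Finset (Fin n) → ℝ)
    (hC0 : ∀ r, Cr r ∅ = 0)
    (hnn : ∀ r T, 0 ≤ Cr r T)
    (hmono : ∀ r (T U : Finset (Fin n)), T ⊆ U → Cr r T ≤ Cr r U)
    (hsub : ∀ r (X Y : Finset (Fin n)) (i : Fin n), X ⊆ Y → i ∉ Y →
      Cr r (insert i Y) - Cr r Y ≤ Cr r (insert i X) - Cr r X)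
    (P : Fin n → Finset R) (hP : isPNE Strat Cr P)
    (Q : Fin n → Finset R) (hQ : ∀ i, Q i ∈ Strat i)
    (i : Fin n) :
    privCost Cr P i ≤ ∑ r ∈ Q i, Cr r {i} :=
  privCost_le_standalone_of_submodular_general Strat Cr hC0 hnn hsub P hP Q hQ i
end
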